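/- (Proposition 3, vertical variant: ULA-to-URA expansion.) Let N, M ≥ 1, let (u, v) be a Golay complementary pair of unimodular sequences of length N, and let w_PA, w_PB : {0,…,M−1} → ℂ be arbitrary sequences. Define 2N×M matrices W_A, W_B by: for 0 ≤ n ≤ N−1 and 0 ≤ m ≤ M−1, W_A(n,m) = u(n)·w_PA(m), W_A(N+n,m) = −v(n)·conj(w_PB(M−1−m)), W_B(n,m) = u(n)·w_PB(m), W_B(N+n,m) = v(n)·conj(w_PA(M−1−m)). Then for all ψ_y, ψ_z ∈ ℝ, |F_{W_A}(ψ_y,ψ_z)|² + |F_{W_B}(ψ_y,ψ_z)|² = 2N·( |F_{w_PA}(ψ_y)|² + |F_{w_PB}(ψ_y)|² ), where F_{w_PA}, F_{w_PB} denote one-dimensional array factors. -/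

import Mathlib

/-!
Stacking the expanders vertically makes both two-dimensional array factors separate. With
`P, Q` the array factors of `u, v` at `ψ_z`, `A, B` those of `w_PA, w_PB` at `ψ_y`, and a
unimodular phase `c`, one gets `F_{W_A} = PA - cQB̄` and `F_{W_B} = PB + cQĀ`, since reversing
and conjugating a sequence conjugates its array factor up to a phase. Alamouti's identity
turns the sum power pattern into `(|P|² + |Q|²)(|A|² + |B|²)`, and `|P|² + |Q|² = 2N`: the power
pattern of a sequence is its energy plus twice the real part of a transform of its aperiodic
autocorrelations, and these cancel for a Golay pair.
-/

/-- The one-dimensional array factor of a length-`M` sequence `u` at spatial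
frequency `ψ`: `F_u(ψ) = Σ_{m=0}^{M-1} u(m) · exp(i·m·ψ)`. -/
noncomputable def arrayFactor (M : ℕ) (u : ℕ → ℂ) (ψ : ℝ) : ℂ :=
  ∑ m ∈ Finset.range M, u m * Complex.exp (Complex.I * (m : ℂ) * (ψ : ℂ))

/-- The aperiodic autocorrelation of a length-`M` sequence `u` at shift `τ`:
`R_u(τ) = Σ_{m=0}^{M-1-τ} u(m) · conj(u(m+τ))`. -/
noncomputable def aacf (M : ℕ) (u : ℕ → ℂ) (τ : ℕ) : ℂ :=
  ∑ m ∈ Finset.range (M - τ), u m * (starRingEnd ℂ) (u (m + τ))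

/-- The two-dimensional array factor of an `N×M` matrix `W` at `(ψ_y, ψ_z)`:
`F_W(ψ_y,ψ_z) = Σ_{n=0}^{N-1} Σ_{m=0}^{M-1} W(n,m) · exp(i·(n·ψ_z + m·ψ_y))`. -/
noncomputable def arrayFactor2 (N M : ℕ) (W : ℕ → ℕ → ℂ) (ψy ψz : ℝ) : ℂ :=
  ∑ n ∈ Finset.range N, ∑ m ∈ Finset.range M,
    W n m * Complex.exp (Complex.I * ((n : ℂ) * (ψz : ℂ) + (m : ℂ) * (ψy : ℂ)))

/-- The two-dimensional aperiodic autocorrelation of an `N×M` matrix `W` at integer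
shifts `(τ_n, τ_m)`: the sum of `W(n,m)·conj(W(n+τ_n, m+τ_m))` over all pairs
`(n,m)` with `0 ≤ n, n+τ_n ≤ N−1` and `0 ≤ m, m+τ_m ≤ M−1`. -/
noncomputable def aacf2 (N M : ℕ) (W : ℕ → ℕ → ℂ) (τn τm : ℤ) : ℂ :=
  ∑ n ∈ Finset.range N, ∑ m ∈ Finset.range M,
    if 0 ≤ (n : ℤ) + τn ∧ (n : ℤ) + τn < (N : ℤ) ∧
        0 ≤ (m : ℤ) + τm ∧ (m : ℤ) + τm < (M : ℤ) then
      W n m * (starRingEnd ℂ) (W ((n : ℤ) + τn).toNat ((m : ℤ) + τm).toNat)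
    else 0

/-- `(U, V)` is a Golay complementary array pair of `N×M` matrices: the sum of their
two-dimensional aperiodic autocorrelations vanishes at every nonzero shift. -/
def IsGolayArrayPair (N M : ℕ) (U V : ℕ → ℕ → ℂ) : Prop :=
  ∀ τn τm : ℤ, |τn| ≤ (N : ℤ) - 1 → |τm| ≤ (M : ℤ) - 1 → ¬(τn = 0 ∧ τm = 0) →
    aacf2 N M U τn τm + aacf2 N M V τn τm = 0

open Finset Complex ComplexConjugate

theorem sum_range_sum_Ico_eq_sum_shift {β : Type*} [AddCommMonoid β] (N : ℕ)
    (f : ℕ → ℕ → β) :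
    ∑ n ∈ range N, ∑ k ∈ Ico (n + 1) N, f n k =
      ∑ τ ∈ Ico 1 N, ∑ m ∈ range (N - τ), f m (m + τ) := by
  rw [sum_sigma', sum_sigma']
  refine sum_nbij' (fun p => ⟨p.2 - p.1, p.1⟩) (fun q => ⟨q.2, q.2 + q.1⟩)
    ?_ ?_ ?_ ?_ ?_ <;> rintro ⟨a, b⟩ h <;>
    simp only [mem_sigma, mem_range, mem_Ico, Sigma.mk.injEq, heq_eq_eq, true_and,
      and_true] at h ⊢ <;>
    first | omega | (congr 1; omega)

theorem sum_mul_conj_sum_eq_sum_norm_sq_add_aacf (N : ℕ) (a : ℕ → ℂ) :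
    (∑ n ∈ range N, a n) * conj (∑ n ∈ range N, a n) =
      ∑ n ∈ range N, (‖a n‖ ^ 2 : ℂ) + ∑ τ ∈ Ico 1 N, (aacf N a τ + conj (aacf N a τ)) := by
  have hsplit : ∀ n ∈ range N, ∑ k ∈ range N, a n * conj (a k) =
      ∑ k ∈ range n, a n * conj (a k) + (‖a n‖ ^ 2 : ℂ) +
        ∑ k ∈ Ico (n + 1) N, a n * conj (a k) := fun n hn => by
    rw [← sum_range_add_sum_Ico _ (mem_range.mp hn : n + 1 ≤ N), sum_range_succ, mul_conj']
  have hlower : ∑ n ∈ range N, ∑ k ∈ range n, a n * conj (a k) =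
      conj (∑ n ∈ range N, ∑ k ∈ Ico (n + 1) N, a n * conj (a k)) := by
    rw [sum_comm' (t' := range N) (s' := fun k => Ico (k + 1) N)
      (by intros; simp only [mem_range, mem_Ico]; omega)]
    simp [map_sum, mul_comm]
  have hupper : ∑ n ∈ range N, ∑ k ∈ Ico (n + 1) N, a n * conj (a k) =
      ∑ τ ∈ Ico 1 N, aacf N a τ :=
    sum_range_sum_Ico_eq_sum_shift N _
  rw [map_sum, sum_mul_sum, sum_congr rfl hsplit, sum_add_distrib, sum_add_distrib, hlower,
    hupper, map_sum, sum_add_distrib]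
  ring

theorem aacf_mul_exp (N : ℕ) (u : ℕ → ℂ) (ψ : ℝ) (τ : ℕ) :
    aacf N (fun n => u n * cexp (I * n * ψ)) τ = aacf N u τ * cexp (-(I * τ * ψ)) := by
  rw [aacf, aacf, sum_mul]
  refine sum_congr rfl fun m _ => ?_
  rw [map_mul, ← exp_conj, mul_mul_mul_comm, ← exp_add]
  congr 2
  simp only [map_mul, conj_I, map_natCast, conj_ofReal, Nat.cast_add, map_add]
  ring

theorem norm_sq_arrayFactor_add_of_golay (N : ℕ) (u v : ℕ → ℂ)
    (hu : ∀ n < N, ‖u n‖ = 1) (hv : ∀ n < N, ‖v n‖ = 1)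
    (hGolay : ∀ τ, 1 ≤ τ → τ < N → aacf N u τ + aacf N v τ = 0) (ψ : ℝ) :
    ‖arrayFactor N u ψ‖ ^ 2 + ‖arrayFactor N v ψ‖ ^ 2 = 2 * N := by
  have hphase : ∀ n : ℕ, ‖cexp (I * n * ψ)‖ = 1 := fun n => by
    simpa [mul_comm, mul_left_comm] using norm_exp_I_mul_ofReal (n * ψ)
  have henergy : ∀ n ∈ range N,
      (‖u n * cexp (I * n * ψ)‖ ^ 2 : ℂ) + ‖v n * cexp (I * n * ψ)‖ ^ 2 = 2 := fun n hn => by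
    rw [mem_range] at hn
    rw [norm_mul, norm_mul, hphase, hu n hn, hv n hn]
    norm_num
  have hcorr : ∀ τ ∈ Ico 1 N,
      aacf N (fun n => u n * cexp (I * n * ψ)) τ + aacf N (fun n => v n * cexp (I * n * ψ)) τ
        = 0 := fun τ hτ => by
    rw [mem_Ico] at hτ
    rw [aacf_mul_exp, aacf_mul_exp, ← add_mul, hGolay τ hτ.1 hτ.2, zero_mul]
  have key : (‖arrayFactor N u ψ‖ ^ 2 : ℂ) + ‖arrayFactor N v ψ‖ ^ 2 = 2 * N := by
    rw [← mul_conj', ← mul_conj', arrayFactor, arrayFactor, sum_mul_conj_sum_eq_sum_norm_sq_add_aacf,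
      sum_mul_conj_sum_eq_sum_norm_sq_add_aacf, add_add_add_comm, ← sum_add_distrib, ← sum_add_distrib,
      sum_congr rfl henergy, sum_const, card_range, nsmul_eq_mul,
      sum_eq_zero fun τ hτ => by rw [add_add_add_comm, ← map_add, hcorr τ hτ, map_zero, add_zero]]
    ring
  exact_mod_cast key

theorem arrayFactor_neg (M : ℕ) (u : ℕ → ℂ) (ψ : ℝ) :
    arrayFactor M (fun m => -u m) ψ = -arrayFactor M u ψ := by
  simp [arrayFactor, sum_neg_distrib]

theorem arrayFactor_conj_reverse (M : ℕ) (w : ℕ → ℂ) (ψ : ℝ) :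
    arrayFactor M (fun m => conj (w (M - 1 - m))) ψ =
      cexp (I * (M - 1 : ℕ) * ψ) * conj (arrayFactor M w ψ) := by
  rw [arrayFactor, ← sum_range_reflect, arrayFactor, map_sum, mul_sum]
  refine sum_congr rfl fun m hm => ?_
  rw [mem_range] at hm
  rw [show M - 1 - (M - 1 - m) = m by omega, Nat.cast_sub (by omega : m ≤ M - 1), map_mul,
    ← exp_conj, mul_left_comm, ← exp_add]
  congr 2
  simp only [map_mul, conj_I, map_natCast, conj_ofReal]
  ring

theorem arrayFactor2_of_eq_mul (N M : ℕ) (W : ℕ → ℕ → ℂ) (p w : ℕ → ℂ)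
    (h : ∀ n < N, ∀ m < M, W n m = p n * w m) (ψy ψz : ℝ) :
    arrayFactor2 N M W ψy ψz = arrayFactor N p ψz * arrayFactor M w ψy := by
  rw [arrayFactor2, arrayFactor, arrayFactor, sum_mul_sum]
  refine sum_congr rfl fun n hn => sum_congr rfl fun m hm => ?_
  rw [h n (mem_range.mp hn) m (mem_range.mp hm), mul_add, exp_add]
  ring_nf

theorem arrayFactor2_add_rows (N N' M : ℕ) (W : ℕ → ℕ → ℂ) (ψy ψz : ℝ) :
    arrayFactor2 (N + N') M W ψy ψz =
      arrayFactor2 N M W ψy ψz +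
        cexp (I * N * ψz) * arrayFactor2 N' M (fun n m => W (N + n) m) ψy ψz := by
  rw [arrayFactor2, arrayFactor2, arrayFactor2, sum_range_add, mul_sum]
  congr 1
  refine sum_congr rfl fun n _ => ?_
  rw [mul_sum]
  refine sum_congr rfl fun m _ => ?_
  rw [mul_left_comm, ← exp_add]
  push_cast
  ring_nf

-- Multiplicativity of the quaternion norm, in the guise of Alamouti's space-time code.
theorem norm_sq_sub_add_norm_sq_add_of_norm_eq_one (P Q A B c : ℂ) (hc : ‖c‖ = 1) :
    ‖P * A - c * Q * conj B‖ ^ 2 + ‖P * B + c * Q * conj A‖ ^ 2 =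
      (‖P‖ ^ 2 + ‖Q‖ ^ 2) * (‖A‖ ^ 2 + ‖B‖ ^ 2) := by
  have hc' : c * conj c = 1 := by rw [mul_conj', hc]; norm_num
  apply ofReal_injective
  push_cast
  simp only [← mul_conj', map_sub, map_add, map_mul, conj_conj]
  linear_combination (Q * conj Q * (A * conj A + B * conj B)) * hc'

theorem ula_to_ura_expansion_vertical_general (N M : ℕ)
    (u v wPA wPB : ℕ → ℂ) (WA WB : ℕ → ℕ → ℂ)
    (hu : ∀ n < N, ‖u n‖ = 1) (hv : ∀ n < N, ‖v n‖ = 1)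
    (hGolay : ∀ τ, 1 ≤ τ → τ < N → aacf N u τ + aacf N v τ = 0)
    (hA1 : ∀ n < N, ∀ m < M, WA n m = u n * wPA m)
    (hA2 : ∀ n < N, ∀ m < M,
      WA (N + n) m = -(v n * (starRingEnd ℂ) (wPB (M - 1 - m))))
    (hB1 : ∀ n < N, ∀ m < M, WB n m = u n * wPB m)
    (hB2 : ∀ n < N, ∀ m < M,
      WB (N + n) m = v n * (starRingEnd ℂ) (wPA (M - 1 - m)))
    (ψy ψz : ℝ) :
    ‖arrayFactor2 (2 * N) M WA ψy ψz‖ ^ 2 +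
        ‖arrayFactor2 (2 * N) M WB ψy ψz‖ ^ 2 =
      2 * N * (‖arrayFactor M wPA ψy‖ ^ 2 +
                ‖arrayFactor M wPB ψy‖ ^ 2) := by
  set c := cexp (I * N * ψz) * cexp (I * (M - 1 : ℕ) * ψy)
  have hc : ‖c‖ = 1 := by simp [c, norm_exp]
  have hA : arrayFactor2 (2 * N) M WA ψy ψz = arrayFactor N u ψz * arrayFactor M wPA ψy -
      c * arrayFactor N v ψz * conj (arrayFactor M wPB ψy) := by
    rw [two_mul, arrayFactor2_add_rows, arrayFactor2_of_eq_mul _ _ _ _ _ hA1,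
      arrayFactor2_of_eq_mul _ _ _ (fun n => -v n) _
        (fun n hn m hm => (hA2 n hn m hm).trans (neg_mul _ _).symm),
      arrayFactor_neg, arrayFactor_conj_reverse]
    ring
  have hB : arrayFactor2 (2 * N) M WB ψy ψz = arrayFactor N u ψz * arrayFactor M wPB ψy +
      c * arrayFactor N v ψz * conj (arrayFactor M wPA ψy) := by
    rw [two_mul, arrayFactor2_add_rows, arrayFactor2_of_eq_mul _ _ _ _ _ hB1,
      arrayFactor2_of_eq_mul _ _ _ _ _ hB2, arrayFactor_conj_reverse]
    ring
  rw [hA, hB, norm_sq_sub_add_norm_sq_add_of_norm_eq_one _ _ _ _ _ hc,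
    norm_sq_arrayFactor_add_of_golay N u v hu hv hGolay]

/-- Proposition 3, vertical variant: expanding a one-dimensional protoarray by a
Golay complementary pair of expanders stacked vertically yields a rectangular array
whose sum power pattern is `2N` times that of the protoarray. -/
theorem ula_to_ura_expansion_vertical (N M : ℕ) (hN : 1 ≤ N) (hM : 1 ≤ M)
    (u v wPA wPB : ℕ → ℂ) (WA WB : ℕ → ℕ → ℂ)
    (hu : ∀ n < N, ‖u n‖ = 1) (hv : ∀ n < N, ‖v n‖ = 1)
    (hGolay : ∀ τ, 1 ≤ τ → τ < N → aacf N u τ + aacf N v τ = 0)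
    (hA1 : ∀ n < N, ∀ m < M, WA n m = u n * wPA m)
    (hA2 : ∀ n < N, ∀ m < M,
      WA (N + n) m = -(v n * (starRingEnd ℂ) (wPB (M - 1 - m))))
    (hB1 : ∀ n < N, ∀ m < M, WB n m = u n * wPB m)
    (hB2 : ∀ n < N, ∀ m < M,
      WB (N + n) m = v n * (starRingEnd ℂ) (wPA (M - 1 - m)))
    (ψy ψz : ℝ) :
    ‖arrayFactor2 (2 * N) M WA ψy ψz‖ ^ 2 +
        ‖arrayFactor2 (2 * N) M WB ψy ψz‖ ^ 2 =
      2 * N * (‖arrayFactor M wPA ψy‖ ^ 2 +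
                ‖arrayFactor M wPB ψy‖ ^ 2) :=
  ula_to_ura_expansion_vertical_general N M u v wPA wPB WA WB hu hv hGolay hA1 hA2 hB1 hB2 ψy ψz
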